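/- arXiv:quant-ph/0212151 — 2 statements merged into one kernel-verified Lean document; each statement's English description precedes it below -/
import Mathlib

section
/- Let q, a ∈ S_n with τ(q) in the relative interior of Δ_{n-1}, and suppose τ(a) ∈ C_k^q. Then for every index r ≠ k, the entire modulus great circle segment ⟨e_r ↻ a⟩ is contained in τ^{-1}(C_k^q); that is, every apparatus state on such a segment yields the same outcome k. -/
open MeasureTheory

noncomputable section

instance (n : ℕ) : MeasurableSpace (EuclideanSpace ℂ (Fin n)) := borel _
instance (n : ℕ) : BorelSpace (EuclideanSpace ℂ (Fin n)) := ⟨rfl⟩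

/-- The unit sphere `S_n = {z ∈ ℂ^n : ∑ |z_i|² = 1}` of `ℂ^n ≅ ℝ^{2n}`
(with the Euclidean metric). -/
def Sph (n : ℕ) : Set (EuclideanSpace ℂ (Fin n)) := Metric.sphere 0 1

/-- The standard `(n-1)`-simplex `Δ_{n-1}` in `ℝ^n` (with the Euclidean metric). -/
def Splx (n : ℕ) : Set (EuclideanSpace ℝ (Fin n)) :=
  {x | (∀ i, 0 ≤ x i) ∧ ∑ i, x i = 1}

/-- `τ(z) = (|z_1|², …, |z_n|²)`. -/
def tau (n : ℕ) (z : EuclideanSpace ℂ (Fin n)) : EuclideanSpace ℝ (Fin n) :=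
  (WithLp.equiv 2 (Fin n → ℝ)).symm fun i => ‖z i‖ ^ 2

/-- `C_k^q`: the relative interior of the convex hull of
`{e_1, …, e_{k-1}, τ(q), e_{k+1}, …, e_n}`. -/
def Ck (n : ℕ) (q : EuclideanSpace ℂ (Fin n)) (k : Fin n) :
    Set (EuclideanSpace ℝ (Fin n)) :=
  intrinsicInterior ℝ (convexHull ℝ
    (insert (tau n q) ((fun j => EuclideanSpace.single j (1 : ℝ)) '' {j | j ≠ k})))

/-- The modulus great circle segment `⟨e_r ↻ a⟩`. -/
def mgcs (n : ℕ) (r : Fin n) (a : EuclideanSpace ℂ (Fin n)) :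
    Set (EuclideanSpace ℂ (Fin n)) :=
  {c ∈ Sph n | ∃ s : ℝ, 0 < s ∧ s < 1 ∧
    (∀ j, j ≠ r → ‖c j‖ = Real.sqrt s * ‖a j‖) ∧
    ‖c r‖ = Real.sqrt ((1 - s) + s * ‖a r‖ ^ 2)}

/-!
The map `τ` sends the segment `⟨e_r ↻ a⟩` onto the open segment from the vertex `e_r` to `τ(a)`:
on it, `τ(c) = (1 - s) e_r + s τ(a)`. Since `e_r` (`r ≠ k`) is one of the points spanning
`C_k^q`, and `τ(a)` lies in the relative interior of their convex hull, the whole open segment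
lies in that relative interior: a homothety centred at the vertex carries a relative
neighbourhood of `τ(a)` into the hull.
-/

open Set Topology AffineMap

theorem Convex.combo_self_intrinsicInterior_mem_intrinsicInterior {𝕜 V : Type*} [Field 𝕜]
    [LinearOrder 𝕜] [IsStrictOrderedRing 𝕜] [AddCommGroup V] [Module 𝕜 V] [TopologicalSpace V]
    [IsTopologicalAddGroup V] [ContinuousConstSMul 𝕜 V] {s : Set V} (hs : Convex 𝕜 s)
    {x y : V} (hx : x ∈ s) (hy : y ∈ intrinsicInterior 𝕜 s) {a b : 𝕜} (ha : 0 ≤ a) (hb : 0 < b)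
    (hab : a + b = 1) : a • x + b • y ∈ intrinsicInterior 𝕜 s := by
  have hcombo : ∀ p, homothety x b p = a • x + b • p := fun p => by
    rw [homothety_eq_lineMap, lineMap_apply_module, ← hab, add_sub_cancel_right]
  have hxA : x ∈ affineSpan 𝕜 s := subset_affineSpan 𝕜 s hx
  obtain ⟨y, hy, rfl⟩ := hy
  rw [mem_interior_iff_mem_nhds, nhds_induced, Filter.mem_comap] at hy
  obtain ⟨O, hO, hOs⟩ := hy
  rw [← hcombo]
  refine ⟨⟨homothety x b y, homothety_mem hxA b y.2⟩, ?_, rfl⟩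
  rw [mem_interior_iff_mem_nhds, nhds_induced, Filter.mem_comap]
  refine ⟨homothety x b '' O, (homothety_isOpenMap x b hb.ne').image_mem_nhds hO, ?_⟩
  rintro ⟨_, hp⟩ ⟨w, hwO, rfl⟩
  have hwA : w ∈ affineSpan 𝕜 s := by
    have hw : homothety x b⁻¹ (homothety x b w) = w := by
      rw [← comp_apply, ← homothety_mul, inv_mul_cancel₀ hb.ne', homothety_one, id_apply]
    exact hw ▸ homothety_mem hxA b⁻¹ hp
  have hws : w ∈ s := hOs (show (⟨w, hwA⟩ : affineSpan 𝕜 s) ∈ Subtype.val ⁻¹' O from hwO)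
  show homothety x b w ∈ s
  rw [hcombo]
  exact hs hx hws ha hb.le hab

theorem tau_eq_combo_of_mem_mgcs {n : ℕ} {r : Fin n} {a c : EuclideanSpace ℂ (Fin n)}
    (hc : c ∈ mgcs n r a) :
    ∃ s : ℝ, 0 < s ∧ s < 1 ∧ tau n c = (1 - s) • EuclideanSpace.single r 1 + s • tau n a := by
  obtain ⟨-, s, hs0, hs1, hcj, hcr⟩ := hc
  refine ⟨s, hs0, hs1, ?_⟩
  ext j
  simp only [tau, WithLp.equiv_symm_apply, PiLp.add_apply, PiLp.smul_apply,
    PiLp.single_apply, smul_eq_mul]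
  by_cases hjr : j = r
  · subst hjr
    rw [hcr, Real.sq_sqrt (by nlinarith [sq_nonneg ‖a j‖])]
    simp
  · rw [hcj j hjr, mul_pow, Real.sq_sqrt hs0.le, if_neg hjr]
    ring

theorem mgcs_subset_preimage_Ck_general (n : ℕ)
    (q a : EuclideanSpace ℂ (Fin n))
    (k r : Fin n) (hrk : r ≠ k) (hτa : tau n a ∈ Ck n q k) :
    mgcs n r a ⊆ tau n ⁻¹' Ck n q k := by
  intro c hc
  obtain ⟨s, hs0, hs1, hτc⟩ := tau_eq_combo_of_mem_mgcs hc
  have hvertex : EuclideanSpace.single r (1 : ℝ) ∈ convexHull ℝ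
      (insert (tau n q) ((fun j => EuclideanSpace.single j (1 : ℝ)) '' {j | j ≠ k})) :=
    subset_convexHull ℝ _ (mem_insert_of_mem _ ⟨r, hrk, rfl⟩)
  rw [mem_preimage, hτc]
  exact (convex_convexHull ℝ _).combo_self_intrinsicInterior_mem_intrinsicInterior hvertex hτa
    (by linarith) hs0 (by ring)

/-- If `τ(q)` is in the relative interior of `Δ_{n-1}` and `τ(a) ∈ C_k^q`, then for every
`r ≠ k`, the modulus great circle segment `⟨e_r ↻ a⟩` is contained in `τ⁻¹(C_k^q)`. -/
theorem mgcs_subset_preimage_Ck (n : ℕ) (hn : 1 ≤ n)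
    (q a : EuclideanSpace ℂ (Fin n)) (hq : q ∈ Sph n) (ha : a ∈ Sph n)
    (hqint : tau n q ∈ intrinsicInterior ℝ (Splx n))
    (k r : Fin n) (hrk : r ≠ k) (hτa : tau n a ∈ Ck n q k) :
    mgcs n r a ⊆ tau n ⁻¹' Ck n q k :=
  mgcs_subset_preimage_Ck_general n q a k r hrk hτa
end
end

section
/- Let q ∈ S_n with τ(q) in the relative interior of Δ_{n-1}. Then the sets C_1^q, …, C_n^q are pairwise disjoint, and the union of their closures covers the simplex: ⋃_{k=1}^n closure(C_k^q) ∩ Δ_{n-1} = Δ_{n-1}. Equivalently, the convex hulls of the sets {e_1, …, e_{k-1}, τ(q), e_{k+1}, …, e_n}, k = 1, …, n, form a triangulation of Δ_{n-1} whose pieces overlap only in their boundaries. -/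
open MeasureTheory

noncomputable section

/-! Write `p = τ(q)`; its coordinates are positive, since a coordinate functional vanishing at a
relative-interior point of `Δ_{n-1}` would vanish on all of `Δ_{n-1}`. The linear form
`x ↦ p_l x_k - p_k x_l` is `≤ 0` on the `k`-th hull and `≥ 0` on the `l`-th one, so a common
relative-interior point would make it attain its maximum over the `k`-th hull in the relative
interior; it would then vanish on that hull, yet it is `-p_k < 0` at the vertex `e_l`. For the
covering, a point `x` of the simplex lies in the `k`-th hull for any `k` minimising `x_j / p_j`,
and every convex set in finite dimension lies in the closure of its relative interior. -/

open Set Filter Topology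

section TopologicalAffine

variable {𝕜 V P : Type*} [Ring 𝕜] [AddCommGroup V] [Module 𝕜 V] [TopologicalSpace P]
  [AddTorsor V P] {s : Set P} {x : P}

theorem mem_intrinsicInterior_iff_mem_nhdsWithin :
    x ∈ intrinsicInterior 𝕜 s ↔ x ∈ affineSpan 𝕜 s ∧ s ∈ 𝓝[affineSpan 𝕜 s] x := by
  rw [mem_intrinsicInterior]
  constructor
  · rintro ⟨y, hy, rfl⟩
    exact ⟨y.2, preimage_coe_mem_nhds_subtype.mp (mem_interior_iff_mem_nhds.mp hy)⟩
  · rintro ⟨hx, hs⟩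
    exact ⟨⟨x, hx⟩, mem_interior_iff_mem_nhds.mpr (preimage_coe_mem_nhds_subtype.mpr hs), rfl⟩

end TopologicalAffine

section TopologicalVectorSpace

variable {V : Type*} [AddCommGroup V] [Module ℝ V] [TopologicalSpace V]
  [IsTopologicalAddGroup V] [ContinuousSMul ℝ V] {s : Set V} {x y : V}

theorem eventually_add_smul_mem_of_mem_intrinsicInterior (hx : x ∈ intrinsicInterior ℝ s)
    (hy : y ∈ s) : ∀ᶠ t : ℝ in 𝓝 0, x + t • (x - y) ∈ s := by
  rw [mem_intrinsicInterior_iff_mem_nhdsWithin] at hx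
  have hline : Tendsto (fun t : ℝ => x + t • (x - y)) (𝓝 0) (𝓝[affineSpan ℝ s] x) := by
    refine tendsto_nhdsWithin_iff.mpr ⟨?_, Eventually.of_forall fun t => ?_⟩
    · have : Continuous fun t : ℝ => x + t • (x - y) := by fun_prop
      simpa using this.tendsto 0
    · have := AffineMap.lineMap_mem (-t) hx.1 (subset_affineSpan ℝ s hy)
      rwa [AffineMap.lineMap_apply_module', neg_smul, ← smul_neg, neg_sub, add_comm] at this
  exact hline hx.2

theorem IsMaxOn.apply_eq_of_mem_intrinsicInterior {f : V →ₗ[ℝ] ℝ} (hf : IsMaxOn f s x)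
    (hx : x ∈ intrinsicInterior ℝ s) (hy : y ∈ s) : f y = f x := by
  obtain ⟨t, hts, ht⟩ := ((eventually_add_smul_mem_of_mem_intrinsicInterior hx hy).filter_mono
    nhdsWithin_le_nhds |>.and self_mem_nhdsWithin).exists (f := 𝓝[>] (0 : ℝ))
  have hmax : f (x + t • (x - y)) ≤ f x := hf hts
  rw [map_add, map_smul, map_sub, smul_eq_mul] at hmax
  nlinarith [show f y ≤ f x from hf hy]

theorem Convex.add_smul_sub_mem_intrinsicInterior (hs : Convex ℝ s) (hx : x ∈ s)
    (hy : y ∈ intrinsicInterior ℝ s) {t : ℝ} (ht : t ∈ Ioc 0 1) :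
    x + t • (y - x) ∈ intrinsicInterior ℝ s := by
  rw [mem_intrinsicInterior_iff_mem_nhdsWithin] at hy ⊢
  have hxA : x ∈ affineSpan ℝ s := subset_affineSpan ℝ s hx
  set g : V → V := fun w => x + t⁻¹ • (w - x)
  have hgz : g (x + t • (y - x)) = y := by
    simp [g, smul_smul, inv_mul_cancel₀ ht.1.ne']
  have hg : Tendsto g (𝓝[affineSpan ℝ s] (x + t • (y - x))) (𝓝[affineSpan ℝ s] y) := by
    have hmaps : MapsTo g (affineSpan ℝ s) (affineSpan ℝ s) := fun w hw => by
      have := AffineMap.lineMap_mem t⁻¹ hxA hw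
      rwa [AffineMap.lineMap_apply_module', add_comm] at this
    simpa only [hgz] using (show Continuous g by fun_prop).continuousWithinAt
      (x := x + t • (y - x)).tendsto_nhdsWithin hmaps
  refine ⟨?_, mem_of_superset (hg hy.2) fun w hw => ?_⟩
  · have := AffineMap.lineMap_mem t hxA hy.1
    rwa [AffineMap.lineMap_apply_module', add_comm] at this
  · have := hs.add_smul_sub_mem hx hw (Ioc_subset_Icc_self ht)
    simpa [g, smul_smul, mul_inv_cancel₀ ht.1.ne'] using this

end TopologicalVectorSpace

theorem Convex.subset_closure_intrinsicInterior {V : Type*} [NormedAddCommGroup V]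
    [NormedSpace ℝ V] [FiniteDimensional ℝ V] {s : Set V} (hs : Convex ℝ s) :
    s ⊆ closure (intrinsicInterior ℝ s) := by
  intro x hx
  obtain ⟨y, hy⟩ := Set.Nonempty.intrinsicInterior hs ⟨x, hx⟩
  have hlim : Tendsto (fun t : ℝ => x + t • (y - x)) (𝓝[>] 0) (𝓝 x) := by
    have : Continuous fun t : ℝ => x + t • (y - x) := by fun_prop
    simpa using (this.tendsto 0).mono_left nhdsWithin_le_nhds
  exact mem_closure_of_tendsto hlim (mem_of_superset (Ioc_mem_nhdsGT one_pos)
    fun t ht => hs.add_smul_sub_mem_intrinsicInterior hx hy ht)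

section Simplex

variable {n : ℕ}

def vertexReplacedHull (p : EuclideanSpace ℝ (Fin n)) (k : Fin n) :
    Set (EuclideanSpace ℝ (Fin n)) :=
  convexHull ℝ (insert p ((fun j => EuclideanSpace.single j (1 : ℝ)) '' {j | j ≠ k}))

-- for positive `p`, the sign of `ratioDiff p k l x` is that of `x_k / p_k - x_l / p_l`
def ratioDiff (p : EuclideanSpace ℝ (Fin n)) (k l : Fin n) :
    EuclideanSpace ℝ (Fin n) →ₗ[ℝ] ℝ :=
  p l • (EuclideanSpace.proj k : EuclideanSpace ℝ (Fin n) →L[ℝ] ℝ).toLinearMap -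
    p k • (EuclideanSpace.proj l : EuclideanSpace ℝ (Fin n) →L[ℝ] ℝ).toLinearMap

variable {p x : EuclideanSpace ℝ (Fin n)} {k l : Fin n}

theorem ratioDiff_apply : ratioDiff p k l x = p l * x k - p k * x l := rfl

theorem ratioDiff_nonpos_of_mem_vertexReplacedHull (hp : ∀ i, 0 ≤ p i)
    (hx : x ∈ vertexReplacedHull p k) : ratioDiff p k l x ≤ 0 := by
  refine convexHull_min ?_ (convex_halfSpace_le (ratioDiff p k l).isLinear 0) hx
  rintro _ (rfl | ⟨j, hj, rfl⟩)
  · simp [ratioDiff_apply, mul_comm]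
  · simp only [mem_ofPred_eq, ratioDiff_apply, PiLp.single_apply, if_neg (Ne.symm hj)]
    split_ifs <;> linarith [hp k]

theorem single_mem_vertexReplacedHull (h : l ≠ k) :
    EuclideanSpace.single l 1 ∈ vertexReplacedHull p k :=
  subset_convexHull ℝ _ (mem_insert_of_mem _ ⟨l, h, rfl⟩)

theorem disjoint_intrinsicInterior_vertexReplacedHull (hp : ∀ i, 0 < p i) (hkl : k ≠ l) :
    Disjoint (intrinsicInterior ℝ (vertexReplacedHull p k))
      (intrinsicInterior ℝ (vertexReplacedHull p l)) := by
  have hp' : ∀ i, 0 ≤ p i := fun i => (hp i).le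
  refine Set.disjoint_left.mpr fun x hxk hxl => ?_
  have hx : ratioDiff p k l x = 0 := by
    have hk := ratioDiff_nonpos_of_mem_vertexReplacedHull (l := l) hp'
      (intrinsicInterior_subset hxk)
    have hl := ratioDiff_nonpos_of_mem_vertexReplacedHull (l := k) hp'
      (intrinsicInterior_subset hxl)
    rw [ratioDiff_apply] at hk hl ⊢
    linarith
  have hmax : IsMaxOn (ratioDiff p k l) (vertexReplacedHull p k) x := fun y hy =>
    hx ▸ ratioDiff_nonpos_of_mem_vertexReplacedHull hp' hy
  have hl := hmax.apply_eq_of_mem_intrinsicInterior hxk (single_mem_vertexReplacedHull hkl.symm)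
  simp only [hx, ratioDiff_apply, PiLp.single_apply, if_neg hkl, if_true] at hl
  linarith [hp k]

theorem single_mem_splx (i : Fin n) : EuclideanSpace.single i (1 : ℝ) ∈ Splx n :=
  ⟨fun j => by rw [PiLp.single_apply]; positivity, by simp [PiLp.single_apply]⟩

theorem pos_of_mem_intrinsicInterior_splx (hp : p ∈ intrinsicInterior ℝ (Splx n)) (i : Fin n) :
    0 < p i := by
  refine ((intrinsicInterior_subset hp).1 i).lt_of_ne' fun hpi => ?_
  let f := -(EuclideanSpace.proj i : EuclideanSpace ℝ (Fin n) →L[ℝ] ℝ).toLinearMap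
  have hmax : IsMaxOn f (Splx n) p := fun y hy => by simp [f, hpi, hy.1 i]
  have := hmax.apply_eq_of_mem_intrinsicInterior hp (single_mem_splx i)
  simp [f, hpi] at this

theorem exists_mem_vertexReplacedHull (hp : ∀ i, 0 < p i) (hp1 : ∑ i, p i = 1)
    (hx : x ∈ Splx n) : ∃ k, x ∈ vertexReplacedHull p k := by
  obtain ⟨k, -, hk⟩ := Finset.exists_min_image Finset.univ (fun j => x j / p j)
    (Finset.nonempty_of_sum_ne_zero (by rw [hx.2]; exact one_ne_zero))
  refine ⟨k, ?_⟩
  set c := x k / p k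
  have hc : c * p k = x k := div_mul_cancel₀ _ (hp k).ne'
  have hle : ∀ j, c * p j ≤ x j := fun j => (le_div_iff₀ (hp j)).mp (hk j (Finset.mem_univ j))
  have hc0 : 0 ≤ c := div_nonneg (hx.1 k) (hp k).le
  -- `x = c • p + ∑_{j ≠ k} (x_j - c p_j) • e_j`, the `k`-th term of the second sum being `0`
  let w : Fin n → ℝ := fun j => x j - c * p j + if j = k then c else 0
  let z : Fin n → EuclideanSpace ℝ (Fin n) :=
    fun j => if j = k then p else EuclideanSpace.single j 1
  have hwz : ∀ j, w j • z j =
      (if j = k then c • p else 0) + (x j - c * p j) • EuclideanSpace.single j 1 := by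
    intro j
    by_cases hj : j = k
    · subst hj; simp [w, z, hc]
    · simp [w, z, hj]
  have hsum : ∑ j, w j • z j = x := by
    simp only [hwz, Finset.sum_add_distrib, Finset.sum_ite_eq', Finset.mem_univ, if_true]
    ext i
    simp [Pi.single_apply]
  rw [← hsum]
  refine (convex_convexHull ℝ _).sum_mem (fun j _ => ?_) ?_ (fun j _ => ?_)
  · exact add_nonneg (sub_nonneg.mpr (hle j)) (by split_ifs <;> simp [hc0])
  · simp [w, Finset.sum_add_distrib, Finset.sum_sub_distrib, ← Finset.mul_sum, hx.2, hp1]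
  · by_cases hj : j = k
    · simp [z, hj, subset_convexHull ℝ _ (mem_insert p _)]
    · simp only [z, if_neg hj]
      exact single_mem_vertexReplacedHull hj

end Simplex

theorem Ck_triangulation_general (n : ℕ)
    (q : EuclideanSpace ℂ (Fin n))
    (hqint : tau n q ∈ intrinsicInterior ℝ (Splx n)) :
    (Pairwise fun k l => Disjoint (Ck n q k) (Ck n q l)) ∧
    (⋃ k, closure (Ck n q k)) ∩ Splx n = Splx n := by
  have hpos := pos_of_mem_intrinsicInterior_splx hqint
  refine ⟨fun k l hkl => disjoint_intrinsicInterior_vertexReplacedHull hpos hkl, ?_⟩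
  refine inter_eq_right.mpr fun x hx => ?_
  obtain ⟨k, hk⟩ := exists_mem_vertexReplacedHull hpos (intrinsicInterior_subset hqint).2 hx
  exact mem_iUnion.mpr ⟨k, (convex_convexHull ℝ _).subset_closure_intrinsicInterior hk⟩

/-- If `τ(q)` is in the relative interior of `Δ_{n-1}`, the sets `C_1^q, …, C_n^q` are
pairwise disjoint and the union of their closures covers `Δ_{n-1}`. -/
theorem Ck_triangulation (n : ℕ) (hn : 1 ≤ n)
    (q : EuclideanSpace ℂ (Fin n)) (hq : q ∈ Sph n)
    (hqint : tau n q ∈ intrinsicInterior ℝ (Splx n)) :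
    (Pairwise fun k l => Disjoint (Ck n q k) (Ck n q l)) ∧
    (⋃ k, closure (Ck n q k)) ∩ Splx n = Splx n :=
  Ck_triangulation_general n q hqint
end
end
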